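/- arXiv:2303.06392 — 4 statements merged into one kernel-verified Lean document; each statement's English description precedes it below -/
import Mathlib

section
/- Let E be a real normed space and let K ⊆ E be a nontrivial cone with norm-base B_K. If the weak closure cl_w B_K of B_K is weakly compact, then K^{w#} ⊆ cor K⁺, i.e., every x* ∈ E* with x*(x) > 0 for all x in the weak closure of B_K belongs to the algebraic interior of the dual cone K⁺. -/
open Set

variable {E : Type*} [NormedAddCommGroup E] [NormedSpace ℝ E]

/-- `K` is a cone: contains `0` and is closed under nonnegative scalar multiplication. -/
def IsCone (K : Set E) : Prop :=
  (0 : E) ∈ K ∧ ∀ t : ℝ, 0 ≤ t → ∀ x ∈ K, t • x ∈ K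

/-- A cone is nontrivial if it is neither `{0}` nor the whole space. -/
def IsNontrivialCone (K : Set E) : Prop :=
  IsCone K ∧ K ≠ {0} ∧ K ≠ Set.univ

/-- The norm-base of a cone: its intersection with the unit sphere. -/
def normBase (K : Set E) : Set E := {x ∈ K | ‖x‖ = 1}

/-- Closure of a set with respect to the weak topology `σ(E, E*)`. -/
noncomputable def wClosure (S : Set E) : Set E :=
  (toWeakSpace ℝ E).symm '' closure ((toWeakSpace ℝ E) '' S)

/-- A set is weakly compact if it is compact in the weak topology `σ(E, E*)`. -/
def WeaklyCompact (S : Set E) : Prop :=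
  IsCompact ((toWeakSpace ℝ E) '' S)

/-- A set is weakly closed if it equals its weak closure. -/
noncomputable def WeaklyClosed (S : Set E) : Prop :=
  wClosure S = S

/-- The (topological) dual cone `K⁺`. -/
def dualCone (K : Set E) : Set (E →L[ℝ] ℝ) :=
  {f | ∀ k ∈ K, 0 ≤ f k}

/-- The set `K^#` of functionals strictly positive on `K \ {0}`. -/
def sharpCone (K : Set E) : Set (E →L[ℝ] ℝ) :=
  {f | ∀ k ∈ K, k ≠ 0 → 0 < f k}

/-- The set `K^{w#}` of functionals strictly positive on the weak closure of the norm-base. -/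
noncomputable def wSharpCone (K : Set E) : Set (E →L[ℝ] ℝ) :=
  {f | ∀ x ∈ wClosure (normBase K), 0 < f x}

/-- The algebraic interior (core) of a set in a real vector space. -/
def core {X : Type*} [AddCommGroup X] [Module ℝ X] (Ω : Set X) : Set X :=
  {x ∈ Ω | ∀ v : X, ∃ ε > 0, ∀ t ∈ Set.Icc (0 : ℝ) ε, x + t • v ∈ Ω}

/-- The augmented dual cone `K^{a+}`. -/
def augDualCone (K : Set E) : Set ((E →L[ℝ] ℝ) × ℝ) :=
  {p | 0 ≤ p.2 ∧ ∀ y ∈ K, 0 ≤ p.1 y - p.2 * ‖y‖}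

/-- The set `K^{a#}`. -/
def augSharpCone (K : Set E) : Set ((E →L[ℝ] ℝ) × ℝ) :=
  {p | 0 ≤ p.2 ∧ p.1 ∈ sharpCone K ∧ ∀ y ∈ K, y ≠ 0 → 0 < p.1 y - p.2 * ‖y‖}

/-- The set `K^{aw#}`. -/
noncomputable def augWSharpCone (K : Set E) : Set ((E →L[ℝ] ℝ) × ℝ) :=
  {p | 0 ≤ p.2 ∧ p.1 ∈ sharpCone K ∧ ∀ y ∈ wClosure (normBase K), p.2 < p.1 y}

/-- `S_C = conv(B_C)`. -/
noncomputable def convBase (C : Set E) : Set E := convexHull ℝ (normBase C)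

/-- `S_C^0 = conv({0} ∪ B_C)`. -/
noncomputable def convBase0 (C : Set E) : Set E := convexHull ℝ ({0} ∪ normBase C)

/-!
A functional `f` that is strictly positive on the weakly compact set `cl_w B_K` is bounded below
there by some `δ > 0`. Since `|v x| ≤ ‖v‖` on `B_K`, every perturbation `f + t • v` with
`0 ≤ t ≤ δ / (‖v‖ + 1)` stays nonnegative on `B_K`, hence on the cone `K` it generates.
-/

lemma subset_wClosure (S : Set E) : S ⊆ wClosure S := fun x hx =>
  ⟨toWeakSpace ℝ E x, subset_closure (mem_image_of_mem _ hx), rfl⟩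

lemma exists_pos_le_of_weaklyCompact_wClosure {S : Set E} (hS : WeaklyCompact (wClosure S))
    {f : E →L[ℝ] ℝ} (hf : ∀ x ∈ wClosure S, 0 < f x) : ∃ δ > 0, ∀ x ∈ S, δ ≤ f x := by
  have hcont : Continuous fun x : WeakSpace ℝ E => f ((toWeakSpace ℝ E).symm x) :=
    WeakBilin.eval_continuous (topDualPairing ℝ E).flip f
  obtain ⟨δ, hδ, hle⟩ := hS.exists_forall_le' hcont.continuousOn (a := 0)
    (by rintro _ ⟨x, hx, rfl⟩; simpa using hf x hx)
  exact ⟨δ, hδ, fun x hx => by simpa using hle _ (mem_image_of_mem _ (subset_wClosure S hx))⟩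

lemma IsCone.inv_norm_smul_mem_normBase {K : Set E} (hK : IsCone K) {k : E} (hk : k ∈ K)
    (hk0 : k ≠ 0) : ‖k‖⁻¹ • k ∈ normBase K :=
  ⟨hK.2 _ (by positivity) _ hk, norm_smul_inv_norm hk0⟩

lemma IsCone.mem_dualCone_of_nonneg_normBase {K : Set E} (hK : IsCone K) {g : E →L[ℝ] ℝ}
    (hg : ∀ x ∈ normBase K, 0 ≤ g x) : g ∈ dualCone K := by
  intro k hk
  rcases eq_or_ne k 0 with rfl | hk0
  · simp
  · have h := hg _ (hK.inv_norm_smul_mem_normBase hk hk0)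
    rw [map_smul, smul_eq_mul] at h
    exact nonneg_of_mul_nonneg_right h (by positivity)

lemma IsCone.mem_core_dualCone_of_le_normBase {K : Set E} (hK : IsCone K) {f : E →L[ℝ] ℝ}
    {δ : ℝ} (hδ : 0 < δ) (hf : ∀ x ∈ normBase K, δ ≤ f x) : f ∈ core (dualCone K) := by
  refine ⟨hK.mem_dualCone_of_nonneg_normBase fun x hx => hδ.le.trans (hf x hx), fun v => ?_⟩
  refine ⟨δ / (‖v‖ + 1), by positivity, fun t ⟨ht0, htδ⟩ => ?_⟩
  refine hK.mem_dualCone_of_nonneg_normBase fun x hx => ?_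
  have hvx : -‖v‖ ≤ v x := neg_le_of_abs_le (by simpa [hx.2] using v.le_opNorm x)
  have ht : t * (‖v‖ + 1) ≤ δ := (le_div_iff₀ (by positivity)).mp htδ
  have hfx := hf x hx
  simp only [add_apply, smul_apply, smul_eq_mul]
  nlinarith [norm_nonneg v]

theorem stmt1 (K : Set E) (hK : IsNontrivialCone K)
    (hcomp : WeaklyCompact (wClosure (normBase K))) :
    wSharpCone K ⊆ core (dualCone K) := by
  intro f hf
  obtain ⟨δ, hδ, hle⟩ := exists_pos_le_of_weaklyCompact_wClosure hcomp hf
  exact hK.1.mem_core_dualCone_of_le_normBase hδ hle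
end

section
/- Let E be a real normed space and let K ⊆ E be a nontrivial cone with norm-base B_K. If either (a) B_K is weakly compact, or (b) K is weakly closed, the weak closure cl_w B_K is weakly compact, and 0 ∉ cl_w B_K, then cor K⁺ = K^{w#} = K^#. -/
open Set

variable {E : Type*} [NormedAddCommGroup E] [NormedSpace ℝ E]

lemma wClosure_mono {S T : Set E} (hST : S ⊆ T) : wClosure S ⊆ wClosure T :=
  image_mono (closure_mono (image_mono hST))

lemma WeaklyCompact.wClosure_eq {S : Set E} (hS : WeaklyCompact S) : wClosure S = S := by
  rw [wClosure, hS.isClosed.closure_eq, image_image]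
  simp

lemma normBase_subset_diff_zero {F : Type*} [NormedAddCommGroup F] (K : Set F) :
    normBase K ⊆ K \ {0} := fun x ⟨hxK, hx1⟩ =>
  ⟨hxK, fun hx0 => by simp_all⟩

lemma wClosure_normBase_subset_and_weaklyCompact {K : Set E}
    (h : WeaklyCompact (normBase K) ∨
      (WeaklyClosed K ∧ WeaklyCompact (wClosure (normBase K)) ∧
        (0 : E) ∉ wClosure (normBase K))) :
    wClosure (normBase K) ⊆ K \ {0} ∧ WeaklyCompact (wClosure (normBase K)) := by
  rcases h with hcpt | ⟨hcl, hcpt, h0⟩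
  · rw [hcpt.wClosure_eq]
    exact ⟨normBase_subset_diff_zero K, hcpt⟩
  · refine ⟨fun x hx => ⟨?_, fun hx0 => h0 (hx0 ▸ hx)⟩, hcpt⟩
    exact hcl ▸ wClosure_mono (fun y hy => hy.1) hx

lemma IsCompact.exists_pos_forall_add_mul_pos {X : Type*} [TopologicalSpace X] {W : Set X}
    (hW : IsCompact W) {f v : X → ℝ} (hf : ContinuousOn f W) (hv : ContinuousOn v W)
    (hfW : ∀ x ∈ W, 0 < f x) : ∃ ε > 0, ∀ t ∈ Icc 0 ε, ∀ x ∈ W, 0 < f x + t * v x := by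
  obtain ⟨δ, hδ, hδf⟩ := hW.exists_forall_le' hf hfW
  obtain ⟨C, hC⟩ := hW.exists_bound_of_continuousOn hv
  refine ⟨δ / (|C| + 1), by positivity, fun t ⟨ht0, htε⟩ x hx => ?_⟩
  have hεC : δ / (|C| + 1) * |C| < δ := by
    rw [div_mul_eq_mul_div, div_lt_iff₀ (by positivity)]
    nlinarith [abs_nonneg C]
  have htv : -(t * v x) ≤ δ / (|C| + 1) * |C| := calc
    -(t * v x) ≤ t * |v x| := by rw [← mul_neg]; exact mul_le_mul_of_nonneg_left (neg_le_abs _) ht0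
    _ ≤ δ / (|C| + 1) * |C| :=
      mul_le_mul htε ((Real.norm_eq_abs _ ▸ hC x hx).trans (le_abs_self C)) (abs_nonneg _)
        (by positivity)
  linarith [hδf x hx]

namespace IsCone

variable {K : Set E}

lemma inv_norm_smul_mem_normBase_s3 (hK : IsCone K) {k : E} (hk : k ∈ K) (hk0 : k ≠ 0) :
    ‖k‖⁻¹ • k ∈ normBase K :=
  ⟨hK.2 _ (by positivity) k hk,
    by rw [norm_smul, norm_inv, norm_norm, inv_mul_cancel₀ (norm_ne_zero_iff.mpr hk0)]⟩

lemma mem_sharpCone_of_pos_on_normBase (hK : IsCone K) {f : E →L[ℝ] ℝ}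
    (hf : ∀ x ∈ normBase K, 0 < f x) : f ∈ sharpCone K := by
  intro k hk hk0
  have hfk := hf _ (hK.inv_norm_smul_mem_normBase_s3 hk hk0)
  rw [map_smul, smul_eq_mul] at hfk
  exact pos_of_mul_pos_right hfk (inv_nonneg.mpr (norm_nonneg k))

lemma mem_dualCone_of_pos_on_normBase (hK : IsCone K) {f : E →L[ℝ] ℝ}
    (hf : ∀ x ∈ normBase K, 0 < f x) : f ∈ dualCone K := fun k hk => by
  rcases eq_or_ne k 0 with rfl | hk0
  · simp
  · exact (hK.mem_sharpCone_of_pos_on_normBase hf k hk hk0).le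

lemma wSharpCone_subset_sharpCone (hK : IsCone K) : wSharpCone K ⊆ sharpCone K := fun _ hf =>
  hK.mem_sharpCone_of_pos_on_normBase fun x hx => hf x (subset_wClosure _ hx)

lemma mem_core_dualCone_of_pos_on_weaklyCompact (hK : IsCone K) {W : Set E} (hW : WeaklyCompact W)
    (hKW : normBase K ⊆ W) {f : E →L[ℝ] ℝ} (hf : ∀ x ∈ W, 0 < f x) :
    f ∈ core (dualCone K) := by
  refine ⟨hK.mem_dualCone_of_pos_on_normBase fun x hx => hf x (hKW hx), fun v => ?_⟩
  obtain ⟨ε, hε, hpos⟩ := hW.exists_pos_forall_add_mul_pos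
    (WeakBilin.eval_continuous _ f).continuousOn (WeakBilin.eval_continuous _ v).continuousOn
    (forall_mem_image.mpr hf)
  exact ⟨ε, hε, fun t ht => hK.mem_dualCone_of_pos_on_normBase fun x hx =>
    hpos t ht _ (mem_image_of_mem _ (hKW hx))⟩

end IsCone

lemma sharpCone_subset_wSharpCone {K : Set E} (hsub : wClosure (normBase K) ⊆ K \ {0}) :
    sharpCone K ⊆ wSharpCone K := fun _ hf _ hx =>
  hf _ (hsub hx).1 (hsub hx).2

lemma core_dualCone_subset_sharpCone (K : Set E) : core (dualCone K) ⊆ sharpCone K := by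
  rintro f ⟨hfK, hcore⟩ x hxK hx0
  refine (hfK x hxK).lt_of_ne fun hfx => ?_
  obtain ⟨g, -, hg⟩ := exists_dual_vector ℝ x (norm_ne_zero_iff.mpr hx0)
  obtain ⟨ε, hε, hmem⟩ := hcore (-g)
  have hperturbed := hmem ε ⟨hε.le, le_rfl⟩ x hxK
  simp only [add_apply, smul_apply, neg_apply, smul_eq_mul, hg, ← hfx, RCLike.ofReal_real_eq_id,
    id_eq] at hperturbed
  nlinarith [norm_pos_iff.mpr hx0]

theorem stmt3 (K : Set E) (hK : IsNontrivialCone K)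
    (h : WeaklyCompact (normBase K) ∨
      (WeaklyClosed K ∧ WeaklyCompact (wClosure (normBase K)) ∧
        (0 : E) ∉ wClosure (normBase K))) :
    core (dualCone K) = wSharpCone K ∧ wSharpCone K = sharpCone K := by
  obtain ⟨hsub, hcpt⟩ := wClosure_normBase_subset_and_weaklyCompact h
  have hsharp : wSharpCone K = sharpCone K :=
    hK.1.wSharpCone_subset_sharpCone.antisymm (sharpCone_subset_wSharpCone hsub)
  refine ⟨(hsharp ▸ core_dualCone_subset_sharpCone K).antisymm fun f hf => ?_, hsharp⟩
  exact hK.1.mem_core_dualCone_of_pos_on_weaklyCompact hcpt (subset_wClosure _) hf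
end

section
/- Let E be a real normed space, K ⊆ E a nontrivial cone with norm-base B_K, and A ⊆ E a nontrivial cone with norm-base B_A. Assume that at least one of the sets cl S_{−K} and cl S_A^0 is weakly compact. If cl S_A^0 ∩ cl S_{−K} = ∅, then there exists (x*, α) ∈ K^{aw#} with α > 0 such that x*(a) + α‖a‖ > 0 for all a ∈ A \ {0} and x*(k) + α‖k‖ < 0 for all k ∈ (−K) \ {0}. -/
open Set

variable {E : Type*} [NormedAddCommGroup E] [NormedSpace ℝ E]

/-!
Separate the closed convex sets `cl S_{-K}` and `cl S_A^0` strictly in the weak topology, where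
one of them is compact and both are closed (a convex set has the same norm and weak closure):
`g < u` on `S_{-K}` and `v < g` on `S_A^0` with `u < v`. Since `0 ∈ S_A^0`, `v < 0`, and by
homogeneity `g k < u ‖k‖` on `-K` and `v ‖a‖ < g a` on `A`; every `α ∈ (-v, -u)` then works, the
bound `-u ≤ g` on `B_K` passing to its weak closure because half-spaces are weakly closed.
-/

theorem exists_separating_functional_of_weaklyCompact {S T : Set E} (hS : Convex ℝ S)
    (hT : Convex ℝ T) (hcomp : WeaklyCompact (closure S) ∨ WeaklyCompact (closure T))
    (hdisj : Disjoint (closure S) (closure T)) :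
    ∃ (g : E →L[ℝ] ℝ) (u v : ℝ), u < v ∧ (∀ x ∈ S, g x < u) ∧ ∀ y ∈ T, v < g y := by
  have : LocallyConvexSpace ℝ (WeakSpace ℝ E) := WeakBilin.locallyConvexSpace
  set e := toWeakSpace ℝ E
  have hSw : e '' closure S = closure (e '' S) := hS.toWeakSpace_closure ℝ
  have hTw : e '' closure T = closure (e '' T) := hT.toWeakSpace_closure ℝ
  have hSconv : Convex ℝ (e '' closure S) := hS.closure.linear_image e.toLinearMap
  have hTconv : Convex ℝ (e '' closure T) := hT.closure.linear_image e.toLinearMap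
  have hdisj' : Disjoint (e '' closure S) (e '' closure T) :=
    (disjoint_image_iff e.injective).2 hdisj
  obtain ⟨f, u, v, hu, huv, hv⟩ : ∃ (f : WeakSpace ℝ E →L[ℝ] ℝ) (u v : ℝ),
      (∀ x ∈ e '' closure S, f x < u) ∧ u < v ∧ ∀ y ∈ e '' closure T, v < f y := by
    rcases hcomp with hc | hc
    · exact geometric_hahn_banach_compact_closed hSconv hc hTconv (hTw ▸ isClosed_closure) hdisj'
    · exact geometric_hahn_banach_closed_compact hSconv (hSw ▸ isClosed_closure) hTconv hc hdisj'
  exact ⟨f.comp (toWeakSpaceCLM ℝ E), u, v, huv, fun x hx => hu _ ⟨x, subset_closure hx, rfl⟩,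
    fun y hy => hv _ ⟨y, subset_closure hy, rfl⟩⟩

theorem le_apply_of_mem_wClosure {S : Set E} {g : E →L[ℝ] ℝ} {c : ℝ} (h : ∀ x ∈ S, c ≤ g x)
    {x : E} (hx : x ∈ wClosure S) : c ≤ g x := by
  obtain ⟨z, hz, rfl⟩ := hx
  have hcont : Continuous fun z : WeakSpace ℝ E => g ((toWeakSpace ℝ E).symm z) :=
    WeakBilin.eval_continuous _ g
  exact closure_minimal (by rintro - ⟨y, hy, rfl⟩; simpa using h y hy)
    (isClosed_le continuous_const hcont) hz

theorem neg_mem_normBase_neg {F : Type*} [NormedAddCommGroup F] {K : Set F} {x : F}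
    (hx : x ∈ normBase K) : -x ∈ normBase (-K) :=
  ⟨by simpa using hx.1, by simpa using hx.2⟩

theorem zero_mem_convBase0 (C : Set E) : (0 : E) ∈ convBase0 C :=
  subset_convexHull ℝ _ (Or.inl rfl)

theorem IsCone.inv_norm_smul_mem_normBase_s14 {C : Set E} (hC : IsCone C) {x : E} (hx : x ∈ C)
    (hx0 : x ≠ 0) : ‖x‖⁻¹ • x ∈ normBase C :=
  ⟨hC.2 _ (by positivity) x hx, norm_smul_inv_norm hx0⟩

theorem IsCone.mul_norm_lt_apply {C : Set E} (hC : IsCone C) {g : E →L[ℝ] ℝ} {c : ℝ}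
    (h : ∀ x ∈ normBase C, c < g x) {x : E} (hx : x ∈ C) (hx0 : x ≠ 0) : c * ‖x‖ < g x := by
  have := h _ (hC.inv_norm_smul_mem_normBase_s14 hx hx0)
  rwa [map_smul, smul_eq_mul, lt_inv_mul_iff₀ (norm_pos_iff.2 hx0), mul_comm] at this

theorem stmt14 (K A : Set E) (hK : IsNontrivialCone K) (hA : IsNontrivialCone A)
    (hcomp : WeaklyCompact (closure (convBase (-K))) ∨ WeaklyCompact (closure (convBase0 A)))
    (hsep : closure (convBase0 A) ∩ closure (convBase (-K)) = ∅) :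
    ∃ f : E →L[ℝ] ℝ, ∃ α : ℝ, (f, α) ∈ augWSharpCone K ∧ 0 < α ∧
      (∀ a ∈ A, a ≠ 0 → 0 < f a + α * ‖a‖) ∧
      (∀ k ∈ (-K : Set E), k ≠ 0 → f k + α * ‖k‖ < 0) := by
  obtain ⟨g, u, v, huv, hKu, hAv⟩ :=
    exists_separating_functional_of_weaklyCompact (convex_convexHull ℝ _)
      (convex_convexHull ℝ _) hcomp (disjoint_iff_inter_eq_empty.2 (inter_comm _ _ ▸ hsep))
  have hv : v < 0 := by simpa using hAv 0 (zero_mem_convBase0 A)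
  have hKbase : ∀ x ∈ normBase K, -u < g x := fun x hx => by
    simpa using neg_lt_neg (hKu _ (subset_convexHull ℝ _ (neg_mem_normBase_neg hx)))
  have hKnorm : ∀ k ∈ K, k ≠ 0 → -u * ‖k‖ < g k := fun k => hK.1.mul_norm_lt_apply hKbase
  have hAnorm : ∀ a ∈ A, a ≠ 0 → v * ‖a‖ < g a := fun a => hA.1.mul_norm_lt_apply
    fun x hx => hAv x (subset_convexHull ℝ _ (Or.inr hx))
  refine ⟨g, -(u + v) / 2, ⟨by linarith, fun k hk hk0 => ?_, fun y hy => ?_⟩, by linarith,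
    fun a ha ha0 => ?_, fun k hk hk0 => ?_⟩
  · nlinarith [hKnorm k hk hk0, norm_pos_iff.2 hk0]
  · linarith [le_apply_of_mem_wClosure (fun x hx => (hKbase x hx).le) hy]
  · nlinarith [hAnorm a ha ha0, norm_pos_iff.2 ha0]
  · have := hKnorm (-k) hk (neg_ne_zero.2 hk0)
    rw [norm_neg, map_neg] at this
    nlinarith [norm_pos_iff.2 hk0]
end

section
/- Let E be a real normed space, K ⊆ E a nontrivial cone with norm-base B_K, and A ⊆ E a nontrivial cone with norm-base B_A. Then the following are equivalent: (1) there exists (x*, α) ∈ cor K^{a+} such that x*(a) + α‖a‖ > 0 for all a ∈ A \ {0} and x*(k) + α‖k‖ < 0 for all k ∈ (−K) \ {0}; (2) there exists (x*, α) ∈ cor K^{a+} such that x*(a) + α‖a‖ > 0 for all a ∈ (cl A) \ {0} and x*(k) + α‖k‖ < 0 for all k ∈ (−cl(conv K)) \ {0}; (3) there exist real numbers δ₂ > δ₁ > 0 and x* ∈ E* such that for every α ∈ (δ₁, δ₂) one has (x*, α) ∈ cor K^{a+}, x*(a) + α‖a‖ > 0 for all a ∈ (cl A) \ {0}, and x*(k)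 + α‖k‖ < 0 for all k ∈ (−cl(conv K)) \ {0}; (4) there exist real numbers δ₂ > δ₁ > 0 and x* ∈ E* such that for every α ∈ (δ₁, δ₂) one has (x*, α) ∈ K^{a#}, x*(a) + α‖a‖ > 0 for all a ∈ (cl A) \ {0}, and x*(k) + α‖k‖ < 0 for all k ∈ (−cl(conv K)) \ {0}. -/
open Set

variable {E : Type*} [NormedAddCommGroup E] [NormedSpace ℝ E]

/-! The core of `K^{a+}` is characterised by slack in the norm coefficient: `(f, α)` with
`α > 0` lies in it as soon as `(f, β) ∈ K^{a+}` for some `β > α`, and conversely moving in the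
direction `(0, 1)` produces such a `β`. This slack turns the non-strict inequalities, which pass
to `cl A` and to `cl (conv K)` because `{y | β‖y‖ ≤ f y}` is closed and convex, into strict ones
on a whole interval of coefficients. -/

section

variable {K A : Set E} {f : E →L[ℝ] ℝ} {α β : ℝ}

lemma mem_augDualCone_iff : (f, α) ∈ augDualCone K ↔ 0 ≤ α ∧ ∀ y ∈ K, α * ‖y‖ ≤ f y := by
  simp only [augDualCone, mem_ofPred_eq, sub_nonneg]

lemma augSharpCone_subset_augDualCone : augSharpCone K ⊆ augDualCone K := by
  rintro ⟨f, α⟩ ⟨hα, -, hpos⟩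
  refine mem_augDualCone_iff.2 ⟨hα, fun y hy => ?_⟩
  rcases eq_or_ne y 0 with rfl | hy0
  · simp
  · linarith [hpos y hy hy0]

lemma exists_add_mem_augDualCone_of_mem_core (h : (f, α) ∈ core (augDualCone K)) :
    ∃ ε > 0, (f, α + ε) ∈ augDualCone K := by
  obtain ⟨ε, hε, hmem⟩ := h.2 (0, 1)
  refine ⟨ε, hε, ?_⟩
  simpa using hmem ε ⟨hε.le, le_rfl⟩

lemma mem_core_augDualCone_of_lt (hα : 0 < α) (hαβ : α < β) (h : (f, β) ∈ augDualCone K) :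
    (f, α) ∈ core (augDualCone K) := by
  have hK := (mem_augDualCone_iff.1 h).2
  refine ⟨mem_augDualCone_iff.2 ⟨hα.le, fun y hy => ?_⟩, ?_⟩
  · nlinarith [hK y hy, norm_nonneg y]
  rintro ⟨g, γ⟩
  have hsize : 0 < ‖g‖ + |γ| + 1 := by positivity
  refine ⟨min (β - α) α / (‖g‖ + |γ| + 1), by positivity, fun t ⟨ht0, htε⟩ => ?_⟩
  have ht : t * (‖g‖ + |γ|) ≤ min (β - α) α := by
    rw [le_div_iff₀ hsize] at htε
    nlinarith
  have htβ : t * (‖g‖ + |γ|) ≤ β - α := ht.trans (min_le_left _ _)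
  have htα : t * (‖g‖ + |γ|) ≤ α := ht.trans (min_le_right _ _)
  have htγ : -(t * |γ|) ≤ t * γ := by
    rw [← mul_neg]; exact mul_le_mul_of_nonneg_left (neg_abs_le γ) ht0
  have htγ' : t * γ ≤ t * |γ| := mul_le_mul_of_nonneg_left (le_abs_self γ) ht0
  rw [Prod.smul_mk, Prod.mk_add_mk, smul_eq_mul, mem_augDualCone_iff]
  refine ⟨?_, fun y hy => ?_⟩
  · nlinarith [norm_nonneg g]
  have hgy : -(t * (‖g‖ * ‖y‖)) ≤ t * g y := by
    rw [← mul_neg]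
    exact mul_le_mul_of_nonneg_left (neg_le_of_abs_le (g.le_opNorm y)) ht0
  have hny := norm_nonneg y
  calc (α + t * γ) * ‖y‖ ≤ (β - t * ‖g‖) * ‖y‖ := by
          gcongr; nlinarith
    _ ≤ f y + t * g y := by nlinarith [hK y hy]
    _ = (f + t • g) y := by simp

lemma mem_augSharpCone_of_lt (hα : 0 ≤ α) (hαβ : α < β) (h : (f, β) ∈ augDualCone K) :
    (f, α) ∈ augSharpCone K := by
  have hK := (mem_augDualCone_iff.1 h).2
  have hlt : ∀ y ∈ K, y ≠ 0 → α * ‖y‖ < f y := fun y hy hy0 => by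
    have := norm_pos_iff.2 hy0
    nlinarith [hK y hy]
  exact ⟨hα, fun y hy hy0 => by nlinarith [hlt y hy hy0, norm_nonneg y],
    fun y hy hy0 => by linarith [hlt y hy hy0]⟩

lemma convex_setOf_mul_norm_le (f : E →L[ℝ] ℝ) (hα : 0 ≤ α) :
    Convex ℝ {y : E | α * ‖y‖ ≤ f y} := by
  have := (((convexOn_norm convex_univ).smul hα).sub
    ((f : E →ₗ[ℝ] ℝ).concaveOn convex_univ)).convex_le 0
  simpa [sub_nonpos] using this

lemma augDualCone_closure_convexHull (h : (f, α) ∈ augDualCone K) :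
    (f, α) ∈ augDualCone (closure (convexHull ℝ K)) := by
  obtain ⟨hα, hK⟩ := mem_augDualCone_iff.1 h
  refine mem_augDualCone_iff.2 ⟨hα, fun y hy => ?_⟩
  refine closure_minimal (convexHull_min hK (convex_setOf_mul_norm_le f hα)) ?_ hy
  exact isClosed_le (continuous_const.mul continuous_norm) f.continuous

lemma add_mul_norm_neg_of_mem_neg_closure_convexHull (h : (f, β) ∈ augDualCone K) (hαβ : α < β) :
    ∀ k ∈ -(closure (convexHull ℝ K)), k ≠ 0 → f k + α * ‖k‖ < 0 := by
  intro k hk hk0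
  have hk' := (mem_augDualCone_iff.1 (augDualCone_closure_convexHull h)).2 (-k) hk
  rw [map_neg, norm_neg] at hk'
  nlinarith [norm_pos_iff.2 hk0]

lemma add_mul_norm_pos_of_mem_closure (hA : ∀ a ∈ A, a ≠ 0 → 0 < f a + α * ‖a‖) (hαβ : α < β) :
    ∀ a ∈ closure A, a ≠ 0 → 0 < f a + β * ‖a‖ := by
  have hsub : A ⊆ {a | 0 ≤ f a + α * ‖a‖} := fun a ha => by
    rcases eq_or_ne a 0 with rfl | ha0
    · simp
    · exact (hA a ha ha0).le
  have hclosed : IsClosed {a | 0 ≤ f a + α * ‖a‖} :=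
    isClosed_le continuous_const (f.continuous.add (continuous_const.mul continuous_norm))
  intro a ha ha0
  have := closure_minimal hsub hclosed ha
  nlinarith [norm_pos_iff.2 ha0, this.out]

end

theorem stmt16_general (K A : Set E) :
    List.TFAE [
      (∃ f : E →L[ℝ] ℝ, ∃ α : ℝ, (f, α) ∈ core (augDualCone K) ∧
        (∀ a ∈ A, a ≠ 0 → 0 < f a + α * ‖a‖) ∧
        (∀ k ∈ (-K : Set E), k ≠ 0 → f k + α * ‖k‖ < 0)),
      (∃ f : E →L[ℝ] ℝ, ∃ α : ℝ, (f, α) ∈ core (augDualCone K) ∧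
        (∀ a ∈ closure A, a ≠ 0 → 0 < f a + α * ‖a‖) ∧
        (∀ k ∈ -(closure (convexHull ℝ K)), k ≠ 0 → f k + α * ‖k‖ < 0)),
      (∃ δ₁ δ₂ : ℝ, 0 < δ₁ ∧ δ₁ < δ₂ ∧ ∃ f : E →L[ℝ] ℝ, ∀ α ∈ Set.Ioo δ₁ δ₂,
        (f, α) ∈ core (augDualCone K) ∧
        (∀ a ∈ closure A, a ≠ 0 → 0 < f a + α * ‖a‖) ∧
        (∀ k ∈ -(closure (convexHull ℝ K)), k ≠ 0 → f k + α * ‖k‖ < 0)),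
      (∃ δ₁ δ₂ : ℝ, 0 < δ₁ ∧ δ₁ < δ₂ ∧ ∃ f : E →L[ℝ] ℝ, ∀ α ∈ Set.Ioo δ₁ δ₂,
        (f, α) ∈ augSharpCone K ∧
        (∀ a ∈ closure A, a ≠ 0 → 0 < f a + α * ‖a‖) ∧
        (∀ k ∈ -(closure (convexHull ℝ K)), k ≠ 0 → f k + α * ‖k‖ < 0))] := by
  tfae_have 1 → 4 := by
    rintro ⟨f, α, hcore, hA, -⟩
    obtain ⟨ε, hε, hf⟩ := exists_add_mem_augDualCone_of_mem_core hcore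
    have hα := (mem_augDualCone_iff.1 hcore.1).1
    refine ⟨α + ε / 2, α + ε, by positivity, by linarith, f, fun α' hα' => ⟨?_, ?_, ?_⟩⟩
    · exact mem_augSharpCone_of_lt (by linarith [hα'.1]) hα'.2 hf
    · exact add_mul_norm_pos_of_mem_closure hA (by linarith [hα'.1])
    · exact add_mul_norm_neg_of_mem_neg_closure_convexHull hf hα'.2
  tfae_have 4 → 3 := by
    rintro ⟨δ₁, δ₂, hδ₁, hδ, f, h⟩
    refine ⟨δ₁, (δ₁ + δ₂) / 2, hδ₁, by linarith, f, fun α hα => ?_⟩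
    have hmid := augSharpCone_subset_augDualCone (h ((δ₁ + δ₂) / 2) ⟨by linarith, by linarith⟩).1
    obtain ⟨-, hA, hK⟩ := h α ⟨hα.1, by linarith [hα.2]⟩
    exact ⟨mem_core_augDualCone_of_lt (hδ₁.trans hα.1) hα.2 hmid, hA, hK⟩
  tfae_have 3 → 2 := by
    rintro ⟨δ₁, δ₂, -, hδ, f, h⟩
    exact ⟨f, (δ₁ + δ₂) / 2, h _ ⟨by linarith, by linarith⟩⟩
  tfae_have 2 → 1 := by
    rintro ⟨f, α, hcore, hA, hK⟩
    refine ⟨f, α, hcore, fun a ha => hA a (subset_closure ha), fun k hk => hK k ?_⟩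
    exact Set.mem_neg.2 (subset_closure (subset_convexHull ℝ K (Set.mem_neg.1 hk)))
  tfae_finish

theorem stmt16 (K A : Set E) (hK : IsNontrivialCone K) (hA : IsNontrivialCone A) :
    List.TFAE [
      (∃ f : E →L[ℝ] ℝ, ∃ α : ℝ, (f, α) ∈ core (augDualCone K) ∧
        (∀ a ∈ A, a ≠ 0 → 0 < f a + α * ‖a‖) ∧
        (∀ k ∈ (-K : Set E), k ≠ 0 → f k + α * ‖k‖ < 0)),
      (∃ f : E →L[ℝ] ℝ, ∃ α : ℝ, (f, α) ∈ core (augDualCone K) ∧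
        (∀ a ∈ closure A, a ≠ 0 → 0 < f a + α * ‖a‖) ∧
        (∀ k ∈ -(closure (convexHull ℝ K)), k ≠ 0 → f k + α * ‖k‖ < 0)),
      (∃ δ₁ δ₂ : ℝ, 0 < δ₁ ∧ δ₁ < δ₂ ∧ ∃ f : E →L[ℝ] ℝ, ∀ α ∈ Set.Ioo δ₁ δ₂,
        (f, α) ∈ core (augDualCone K) ∧
        (∀ a ∈ closure A, a ≠ 0 → 0 < f a + α * ‖a‖) ∧
        (∀ k ∈ -(closure (convexHull ℝ K)), k ≠ 0 → f k + α * ‖k‖ < 0)),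
      (∃ δ₁ δ₂ : ℝ, 0 < δ₁ ∧ δ₁ < δ₂ ∧ ∃ f : E →L[ℝ] ℝ, ∀ α ∈ Set.Ioo δ₁ δ₂,
        (f, α) ∈ augSharpCone K ∧
        (∀ a ∈ closure A, a ≠ 0 → 0 < f a + α * ‖a‖) ∧
        (∀ k ∈ -(closure (convexHull ℝ K)), k ≠ 0 → f k + α * ‖k‖ < 0))] :=
  stmt16_general K A
end
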